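/- arXiv:0802.1796 — 5 statements merged into one kernel-verified Lean document; each statement's English description precedes it below -/
import Mathlib

section
/- Let p be a prime (regarded as a real number) and let K, L, n, c, t be natural numbers with 1 ≤ c ≤ n and 1 ≤ t < L. For integers 1 ≤ a ≤ r define μ(r,a) := 1 if a = r and μ(r,a) := p^{r−a}(1 − p^{−1}) if a < r. Then for every real number s with s > (K+n)/(L−t), the series Σ_{r=1}^{∞} Σ_{a_1=1}^{r} ⋯ Σ_{a_n=1}^{r} μ(r,a_1)⋯μ(r,a_n) · p^{Kr − Lrs} · ( p^{t·s·min{r, a_1, …, a_c}} − 1 ) converges absolutely and its sum equals p^{K − (L−t)s}(1 − p^{−ts}) / ( (1 − p^{K + (n−c) − (L−t)s})(1 − p^{K + n − Ls}) ). -/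
/-!
Put `x = p^{ts}` and `y = p^{K-Ls}`, so the `r`-th term is `y^r Σ_a μ(a) (x^{M(a)} - 1)` with
`M(a) = min{r, a_1, …, a_c}`. Telescoping `x^M - 1 = Σ_{m<M} (x^{m+1} - x^m)` and exchanging the
sums leaves, for each `m < r`, the `μ`-weighted count of the `a` with `a_1, …, a_c > m`; since
`Σ_{a=m}^{r} μ(r,a) = p^{r-m}` this weight factorises as `p^{(r-m-1)c + (r-1)(n-c)}`. Writing
`r = m + 1 + k`, the `r`-th term becomes the Cauchy coefficient `Σ_{m+k=r-1} C A^m B^k` with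
`C = p^{K-(L-t)s}(1 - p^{-ts})`, `A = p^{K+(n-c)-(L-t)s}` and `B = p^{K+n-Ls}`, so the series is
the product of two convergent geometric series.
-/

open Finset

/-- For `P = p` this is the paper's `μ(r, a)`, the number of elements of `pℤ_p/(p^r)` of valuation
exactly `a`. -/
noncomputable def valuationCount (P : ℝ) (r a : ℕ) : ℝ :=
  if a = r then 1 else P ^ (r - a) * (1 - P⁻¹)

theorem sum_Icc_valuationCount {P : ℝ} (hP : P ≠ 0) {m r : ℕ} (h : m ≤ r) :
    ∑ a ∈ Icc m r, valuationCount P r a = P ^ (r - m) := by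
  induction h using Nat.decreasingInduction with
  | self => simp [valuationCount]
  | of_succ m hm ih =>
    rw [← insert_Icc_add_one_left_eq_Icc hm.le, sum_insert (by simp), ih, valuationCount,
      if_neg hm.ne]
    obtain ⟨k, rfl⟩ := Nat.exists_eq_add_of_lt hm
    rw [show m + k + 1 - m = k + 1 by omega, show m + k + 1 - (m + 1) = k by omega]
    field_simp
    ring

theorem Fin.prod_univ_ite_val_lt {M : Type*} [CommMonoid M] {n c : ℕ} (hcn : c ≤ n) (α β : M) :
    ∏ i : Fin n, (if (i : ℕ) < c then α else β) = α ^ c * β ^ (n - c) := by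
  rw [Fin.prod_univ_eq_prod_range (fun i => if i < c then α else β),
    ← prod_range_mul_prod_Ico _ hcn,
    prod_congr rfl fun i hi => if_pos (mem_range.1 hi),
    prod_congr rfl fun i hi => if_neg (mem_Ico.1 hi).1.not_gt,
    Finset.prod_const, Finset.prod_const, card_range, Nat.card_Ico]

theorem lt_min_inf'_castLE_iff {n c : ℕ} (hc : 0 < c) (hcn : c ≤ n) {a : Fin n → ℕ} {m r : ℕ}
    (hm : m < r) :
    m < min r (univ.inf' ⟨⟨0, hc⟩, mem_univ _⟩ fun i : Fin c => a (Fin.castLE hcn i)) ↔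
      ∀ i : Fin n, (i : ℕ) < c → m < a i := by
  rw [lt_min_iff, and_iff_right hm]
  exact ⟨fun h i hi => (Finset.lt_inf'_iff _).1 h ⟨i, hi⟩ (mem_univ _),
    fun h => (Finset.lt_inf'_iff _).2 fun i _ => h _ i.isLt⟩

theorem sum_prod_valuationCount_mul_boole {P : ℝ} (hP : P ≠ 0) {n c : ℕ} (hc : 0 < c)
    (hcn : c ≤ n) {m r : ℕ} (hm : m < r) :
    ∑ a ∈ Fintype.piFinset (fun _ : Fin n => Icc 1 r), (∏ i, valuationCount P r (a i)) *
      (if m < min r (univ.inf' ⟨⟨0, hc⟩, mem_univ _⟩ fun i : Fin c => a (Fin.castLE hcn i))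
        then 1 else 0) =
      (P ^ (r - (m + 1))) ^ c * (P ^ (r - 1)) ^ (n - c) := by
  have hfactor : ∀ i : Fin n, ∑ v ∈ Icc 1 r,
      valuationCount P r v * (if (i : ℕ) < c → m < v then 1 else 0) =
        if (i : ℕ) < c then P ^ (r - (m + 1)) else P ^ (r - 1) := by
    intro i
    rw [sum_congr rfl fun v _ => mul_boole _ _, ← sum_filter]
    split_ifs with hi
    · rw [← sum_Icc_valuationCount hP (Nat.succ_le_of_lt hm)]
      congr 1
      ext v
      simp only [mem_filter, mem_Icc, hi, true_implies]
      omega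
    · rw [← sum_Icc_valuationCount hP (by omega : 1 ≤ r)]
      simp [hi]
  rw [sum_congr rfl (g := fun a : Fin n → ℕ => ∏ i, valuationCount P r (a i) *
      if (i : ℕ) < c → m < a i then 1 else 0) fun a _ => by
    simp only [prod_mul_distrib, Fintype.prod_boole, lt_min_inf'_castLE_iff hc hcn hm]
    congr,
    ← prod_univ_sum (f := fun (i : Fin n) (v : ℕ) =>
      valuationCount P r v * if (i : ℕ) < c → m < v then 1 else 0),
    prod_congr rfl fun i _ => hfactor i, Fin.prod_univ_ite_val_lt hcn]

theorem sum_prod_valuationCount_mul_pow_min_sub_one {P : ℝ} (hP : P ≠ 0) {n c : ℕ} (hc : 0 < c)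
    (hcn : c ≤ n) (x : ℝ) (r : ℕ) :
    ∑ a ∈ Fintype.piFinset (fun _ : Fin n => Icc 1 r), (∏ i, valuationCount P r (a i)) *
      (x ^ min r (univ.inf' ⟨⟨0, hc⟩, mem_univ _⟩ fun i : Fin c => a (Fin.castLE hcn i)) - 1) =
      ∑ m ∈ range r,
        (x ^ (m + 1) - x ^ m) * ((P ^ (r - (m + 1))) ^ c * (P ^ (r - 1)) ^ (n - c)) := by
  have htelescope : ∀ M ≤ r,
      x ^ M - 1 = ∑ m ∈ range r, (x ^ (m + 1) - x ^ m) * (if m < M then 1 else 0) := by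
    intro M hM
    have h := sum_range_sub (x ^ ·) M
    rw [pow_zero] at h
    rw [← h, sum_congr rfl fun m _ => mul_boole _ _, ← sum_filter]
    congr 1
    ext m
    simp only [mem_filter, mem_range]
    omega
  simp_rw [htelescope _ (min_le_left _ _), mul_sum]
  rw [sum_comm]
  refine sum_congr rfl fun m hm => ?_
  simp_rw [mul_left_comm _ (x ^ (m + 1) - x ^ m)]
  rw [← mul_sum, sum_prod_valuationCount_mul_boole hP hc hcn (mem_range.1 hm)]

theorem cast_min_inf'_castLE {n c : ℕ} (hc : 0 < c) (hcn : c ≤ n) (a : Fin n → ℕ) (r : ℕ) :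
    (min r (univ.inf' ⟨⟨0, hc⟩, mem_univ _⟩ fun i : Fin c => a (Fin.castLE hcn i)) : ℝ) =
      ((min r (univ.inf' ⟨⟨0, hc⟩, mem_univ _⟩ fun i : Fin c => a (Fin.castLE hcn i)) : ℕ) :
        ℝ) := by
  rw [Nat.cast_min]
  exact congrArg _ (Nat.cast_finsetInf' _ _).symm

theorem sum_prod_valuationCount_mul_rpow_min_sub_one {P : ℝ} (hP : 0 < P) {n c : ℕ} (hc : 0 < c)
    (hcn : c ≤ n) (K L t : ℕ) (s : ℝ) (r : ℕ) :
    ∑ a ∈ Fintype.piFinset (fun _ : Fin n => Icc 1 r),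
        (∏ i : Fin n, valuationCount P r (a i)) * P ^ ((K : ℝ) * r - (L : ℝ) * r * s) *
          (P ^ ((t : ℝ) * s * (min r (univ.inf' ⟨⟨0, hc⟩, mem_univ _⟩
            fun i : Fin c => a (Fin.castLE hcn i)) : ℝ)) - 1) =
      (P ^ ((K : ℝ) - L * s)) ^ r * ∑ m ∈ range r, ((P ^ ((t : ℝ) * s)) ^ (m + 1) -
        (P ^ ((t : ℝ) * s)) ^ m) * ((P ^ (r - (m + 1))) ^ c * (P ^ (r - 1)) ^ (n - c)) := by
  rw [show (K : ℝ) * r - L * r * s = (K - L * s) * r by ring, Real.rpow_mul_natCast hP.le,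
    ← sum_prod_valuationCount_mul_pow_min_sub_one hP.ne' hc hcn, mul_sum]
  refine sum_congr rfl fun a _ => ?_
  rw [cast_min_inf'_castLE hc hcn, Real.rpow_mul_natCast hP.le]
  ring

theorem pow_succ_mul_sum_range_succ_eq_sum_antidiagonal {𝕜 : Type*} [Field 𝕜] {x : 𝕜}
    (hx : x ≠ 0) (y P : 𝕜) {n c : ℕ} (hcn : c ≤ n) (r : ℕ) :
    y ^ (r + 1) * ∑ m ∈ range (r + 1),
        (x ^ (m + 1) - x ^ m) * ((P ^ (r + 1 - (m + 1))) ^ c * (P ^ (r + 1 - 1)) ^ (n - c)) =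
      ∑ ij ∈ antidiagonal r,
        x * y * (1 - x⁻¹) * (x * y * P ^ (n - c)) ^ ij.1 * (y * P ^ n) ^ ij.2 := by
  rw [Nat.sum_antidiagonal_eq_sum_range_succ
    (fun i j => x * y * (1 - x⁻¹) * (x * y * P ^ (n - c)) ^ i * (y * P ^ n) ^ j), mul_sum]
  refine sum_congr rfl fun m hm => ?_
  obtain ⟨k, rfl⟩ := Nat.exists_eq_add_of_le (mem_range_succ_iff.1 hm)
  rw [show m + k + 1 - (m + 1) = k by omega, Nat.add_sub_cancel, Nat.add_sub_cancel_left,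
    ← Nat.add_sub_cancel' hcn, pow_add, Nat.add_sub_cancel_left]
  field_simp
  ring

theorem hasSum_of_succ_eq_sum_antidiagonal_geometric {𝕜 : Type*} [NormedField 𝕜]
    [CompleteSpace 𝕜] {A B C : 𝕜} (hA : ‖A‖ < 1) (hB : ‖B‖ < 1) {F : ℕ → 𝕜} (h0 : F 0 = 0)
    (hF : ∀ r, F (r + 1) = ∑ ij ∈ antidiagonal r, C * A ^ ij.1 * B ^ ij.2) :
    HasSum F (C / ((1 - A) * (1 - B))) := by
  have hCA : Summable fun i => ‖C * A ^ i‖ := by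
    simpa only [norm_mul] using (summable_norm_geometric_of_norm_lt_one hA).mul_left ‖C‖
  have hB' := summable_norm_geometric_of_norm_lt_one hB
  rw [← hasSum_nat_add_iff' 1]
  simp only [hF, range_one, sum_singleton, h0, sub_zero]
  convert (summable_norm_sum_mul_antidiagonal_of_summable_norm hCA hB').of_norm.hasSum using 1
  rw [← tsum_mul_tsum_eq_tsum_sum_antidiagonal_of_summable_norm hCA hB', tsum_mul_left,
    tsum_geometric_of_norm_lt_one hA, tsum_geometric_of_norm_lt_one hB, div_eq_mul_inv, mul_inv,
    mul_assoc]

theorem norm_rpow_lt_one {P e : ℝ} (hP : 1 < P) (he : e < 0) : ‖P ^ e‖ < 1 := by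
  rw [Real.norm_of_nonneg (Real.rpow_nonneg (by linarith) e)]
  exact Real.rpow_lt_one_of_one_lt_of_neg hP he

theorem stmt2_general (p : ℕ) (hp : p.Prime) (K L n c t : ℕ)
    (hc1 : 0 < c) (hcn : c ≤ n) (htL : t < L)
    (s : ℝ) (hs : s > ((K : ℝ) + (n : ℝ)) / ((L : ℝ) - (t : ℝ))) :
    Summable (fun r : ℕ =>
      ∑ a ∈ Fintype.piFinset (fun _ : Fin n => Finset.Icc 1 r),
        (∏ i : Fin n, (if a i = r then (1 : ℝ) else (p : ℝ) ^ (r - a i) * (1 - (p : ℝ)⁻¹)))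
          * (p : ℝ) ^ ((K : ℝ) * r - (L : ℝ) * r * s)
          * ((p : ℝ) ^ ((t : ℝ) * s *
              ((min r (Finset.univ.inf' ⟨⟨0, hc1⟩, Finset.mem_univ _⟩
                (fun i : Fin c => a (Fin.castLE hcn i)))) : ℝ)) - 1))
    ∧ (∑' r : ℕ,
        ∑ a ∈ Fintype.piFinset (fun _ : Fin n => Finset.Icc 1 r),
          (∏ i : Fin n, (if a i = r then (1 : ℝ) else (p : ℝ) ^ (r - a i) * (1 - (p : ℝ)⁻¹)))
            * (p : ℝ) ^ ((K : ℝ) * r - (L : ℝ) * r * s)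
            * ((p : ℝ) ^ ((t : ℝ) * s *
                ((min r (Finset.univ.inf' ⟨⟨0, hc1⟩, Finset.mem_univ _⟩
                  (fun i : Fin c => a (Fin.castLE hcn i)))) : ℝ)) - 1))
      = (p : ℝ) ^ ((K : ℝ) - ((L : ℝ) - (t : ℝ)) * s) * (1 - (p : ℝ) ^ (-((t : ℝ) * s)))
        / ((1 - (p : ℝ) ^ ((K : ℝ) + ((n : ℝ) - (c : ℝ)) - ((L : ℝ) - (t : ℝ)) * s))
          * (1 - (p : ℝ) ^ ((K : ℝ) + (n : ℝ) - (L : ℝ) * s))) := by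
  have hP : (1 : ℝ) < p := by exact_mod_cast hp.one_lt
  have hP0 : (0 : ℝ) < p := by linarith
  have hLt : (0 : ℝ) < L - t := sub_pos.2 (by exact_mod_cast htL)
  have hKn : (K : ℝ) + n < (L - t) * s := by rwa [gt_iff_lt, div_lt_iff₀ hLt, mul_comm] at hs
  have hts : 0 ≤ (t : ℝ) * s := by
    have : (0 : ℝ) ≤ K + n := by positivity
    exact mul_nonneg t.cast_nonneg (nonneg_of_mul_nonneg_right (by linarith) hLt)
  have hC : (p : ℝ) ^ ((K : ℝ) - (L - t) * s) = p ^ ((t : ℝ) * s) * p ^ ((K : ℝ) - L * s) := by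
    rw [← Real.rpow_add hP0]; ring_nf
  have hA : (p : ℝ) ^ ((K : ℝ) + (n - c) - (L - t) * s) =
      p ^ ((t : ℝ) * s) * p ^ ((K : ℝ) - L * s) * (p : ℝ) ^ (n - c) := by
    rw [← Real.rpow_natCast, Nat.cast_sub hcn, ← Real.rpow_add hP0, ← Real.rpow_add hP0]; ring_nf
  have hB : (p : ℝ) ^ ((K : ℝ) + n - L * s) = p ^ ((K : ℝ) - L * s) * (p : ℝ) ^ n := by
    rw [← Real.rpow_natCast, ← Real.rpow_add hP0]; ring_nf
  refine (fun h : HasSum _ _ => ⟨h.summable, h.tsum_eq⟩)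
    (hasSum_of_succ_eq_sum_antidiagonal_geometric (norm_rpow_lt_one hP (by linarith))
      (norm_rpow_lt_one hP (by linarith)) ?_ fun r => ?_)
  · exact (sum_prod_valuationCount_mul_rpow_min_sub_one hP0 hc1 hcn K L t s 0).trans (by simp)
  · refine (sum_prod_valuationCount_mul_rpow_min_sub_one hP0 hc1 hcn K L t s (r + 1)).trans ?_
    rw [hC, hA, hB, Real.rpow_neg hP0.le]
    exact pow_succ_mul_sum_range_succ_eq_sum_antidiagonal (Real.rpow_pos_of_pos hP0 _).ne' _ _
      hcn r

/-- Summation formula for the basic generating function: for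
`s > (K+n)/(L-t)` the series
`Σ_{r≥1} Σ_{1≤a_1,…,a_n≤r} μ(r,a_1)⋯μ(r,a_n) p^{Kr-Lrs}(p^{ts·min{r,a_1,…,a_c}} - 1)`
converges absolutely, with sum
`p^{K-(L-t)s}(1-p^{-ts}) / ((1-p^{K+(n-c)-(L-t)s})(1-p^{K+n-Ls}))`.
Here `μ(r,a) = 1` if `a = r` and `μ(r,a) = p^{r-a}(1-p⁻¹)` if `a < r`. -/
theorem stmt2 (p : ℕ) (hp : p.Prime) (K L n c t : ℕ)
    (hc1 : 0 < c) (hcn : c ≤ n) (ht1 : 1 ≤ t) (htL : t < L)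
    (s : ℝ) (hs : s > ((K : ℝ) + (n : ℝ)) / ((L : ℝ) - (t : ℝ))) :
    Summable (fun r : ℕ =>
      ∑ a ∈ Fintype.piFinset (fun _ : Fin n => Finset.Icc 1 r),
        (∏ i : Fin n, (if a i = r then (1 : ℝ) else (p : ℝ) ^ (r - a i) * (1 - (p : ℝ)⁻¹)))
          * (p : ℝ) ^ ((K : ℝ) * r - (L : ℝ) * r * s)
          * ((p : ℝ) ^ ((t : ℝ) * s *
              ((min r (Finset.univ.inf' ⟨⟨0, hc1⟩, Finset.mem_univ _⟩
                (fun i : Fin c => a (Fin.castLE hcn i)))) : ℝ)) - 1))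
    ∧ (∑' r : ℕ,
        ∑ a ∈ Fintype.piFinset (fun _ : Fin n => Finset.Icc 1 r),
          (∏ i : Fin n, (if a i = r then (1 : ℝ) else (p : ℝ) ^ (r - a i) * (1 - (p : ℝ)⁻¹)))
            * (p : ℝ) ^ ((K : ℝ) * r - (L : ℝ) * r * s)
            * ((p : ℝ) ^ ((t : ℝ) * s *
                ((min r (Finset.univ.inf' ⟨⟨0, hc1⟩, Finset.mem_univ _⟩
                  (fun i : Fin c => a (Fin.castLE hcn i)))) : ℝ)) - 1))
      = (p : ℝ) ^ ((K : ℝ) - ((L : ℝ) - (t : ℝ)) * s) * (1 - (p : ℝ) ^ (-((t : ℝ) * s)))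
        / ((1 - (p : ℝ) ^ ((K : ℝ) + ((n : ℝ) - (c : ℝ)) - ((L : ℝ) - (t : ℝ)) * s))
          * (1 - (p : ℝ) ^ ((K : ℝ) + (n : ℝ) - (L : ℝ) * s))) :=
  stmt2_general p hp K L n c t hc1 hcn htL s hs
end

section
/- Let p be a prime, d an even positive integer, and let M be a d×d matrix over the ring ℤ_p of p-adic integers which is alternating (Mᵀ = −M and all diagonal entries are 0), satisfies det M ≠ 0, and whose reduction modulo p has rank d−2 as a matrix over F_p. Then for every natural number r, the number of row vectors x ∈ (ℤ/p^rℤ)^d satisfying x·M̄ = 0, where M̄ is the entrywise reduction of M modulo p^r, equals p^{min(2r, v)}, where v is the p-adic valuation of det M. -/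
/-!
Reduce `M` modulo `p` and choose a basis whose last two vectors span the (two-dimensional)
kernel. Lifting this change of basis to `ℤ_p`, the congruent matrix has a top-left
`(d - 2) × (d - 2)` block `A` that is invertible modulo `p`, hence over `ℤ_p`, and eliminating
with `A` (a Schur-complement step, which is a congruence because the matrix is alternating)
gives `M ≅ A ⊕ !![0, g; -g, 0]` with `A` invertible. Then `det M = unit * g ^ 2`, so
`v = 2 v(g)`, while `x M̄ = 0` forces the `A`-part of `x` to vanish and leaves the equations
`x₁ g = x₂ g = 0` in `ℤ/p^r`, each with `p ^ min r v(g)` solutions.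
-/

open Matrix Module

namespace Matrix

variable {R : Type*} [CommRing R] {n : Type*}

/-- Skew-symmetry does not force a zero diagonal in characteristic `2`. -/
def IsAlternating (M : Matrix n n R) : Prop := Mᵀ = -M ∧ ∀ i, M i i = 0

theorem IsAlternating.apply_swap {M : Matrix n n R} (hM : M.IsAlternating) (i j : n) :
    M j i = -M i j := by
  simpa using congrFun₂ hM.1 i j

theorem IsAlternating.dotProduct_mulVec_self [Fintype n] {M : Matrix n n R}
    (hM : M.IsAlternating) (v : n → R) : v ⬝ᵥ (M *ᵥ v) = 0 := by
  simp only [dotProduct, mulVec, Finset.mul_sum, ← Finset.sum_product']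
  refine Finset.sum_involution (fun a _ => (a.2, a.1)) ?_ ?_ (by simp) (by simp)
  · rintro ⟨i, j⟩ _
    simp only [hM.apply_swap i j]
    ring
  · rintro ⟨i, j⟩ _ hne heq
    obtain rfl : j = i := (Prod.ext_iff.mp heq).1
    simp [hM.2] at hne

theorem transpose_mul_mul_apply_self [Fintype n] {m : Type*} (M : Matrix n n R)
    (P : Matrix n m R) (k : m) :
    (Pᵀ * M * P) k k = (fun i => P i k) ⬝ᵥ (M *ᵥ fun i => P i k) := by
  simp only [mul_apply, transpose_apply, dotProduct, mulVec, Finset.mul_sum, Finset.sum_mul]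
  rw [Finset.sum_comm]
  simp only [mul_comm, mul_left_comm]

theorem IsAlternating.transpose_mul_mul [Fintype n] {m : Type*} {M : Matrix n n R}
    (hM : M.IsAlternating) (P : Matrix n m R) : (Pᵀ * M * P).IsAlternating :=
  ⟨by simp [transpose_mul, hM.1, Matrix.mul_assoc], fun k => by
    rw [transpose_mul_mul_apply_self, hM.dotProduct_mulVec_self]⟩

theorem IsAlternating.of_eq_transpose_mul_mul [Fintype n] [DecidableEq n] {M D P : Matrix n n R}
    (hM : M.IsAlternating) (hP : IsUnit P.det) (h : M = Pᵀ * D * P) : D.IsAlternating := by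
  have : D = P⁻¹ᵀ * M * P⁻¹ := by
    rw [h, transpose_nonsing_inv, Matrix.mul_assoc, Matrix.mul_assoc, mul_nonsing_inv _ hP,
      Matrix.mul_one, ← Matrix.mul_assoc, nonsing_inv_mul _ (isUnit_det_transpose P hP),
      Matrix.one_mul]
  exact this ▸ hM.transpose_mul_mul _

theorem IsAlternating.submatrix {m : Type*} {M : Matrix n n R} (hM : M.IsAlternating)
    (f : m → n) : (M.submatrix f f).IsAlternating :=
  ⟨by ext i j; exact hM.apply_swap _ _, fun i => hM.2 _⟩

theorem IsAlternating.toBlocks₂₁ {m l : Type*} {S : Matrix (m ⊕ l) (m ⊕ l) R}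
    (hS : S.IsAlternating) : S.toBlocks₂₁ = -S.toBlocks₁₂ᵀ := by
  ext i j
  exact hS.apply_swap _ _

theorem IsAlternating.fin_two {M : Matrix (Fin 2) (Fin 2) R} (hM : M.IsAlternating) :
    M = !![0, M 0 1; -M 0 1, 0] := by
  ext i j
  fin_cases i <;> fin_cases j <;> simp [hM.2, hM.apply_swap 0 1]

theorem transpose_invOf_of_transpose_eq_neg [Fintype n] [DecidableEq n] {A : Matrix n n R}
    [Invertible A] (hA : Aᵀ = -A) : (⅟A)ᵀ = -⅟A :=
  calc (⅟A)ᵀ = (⅟A)ᵀ * A * ⅟A := by rw [Matrix.mul_assoc, mul_invOf_self, Matrix.mul_one]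
    _ = -(A * ⅟A)ᵀ * ⅟A := by rw [transpose_mul, hA, Matrix.mul_neg, neg_neg]
    _ = -⅟A := by simp

/-- The Schur-complement factorization `fromBlocks_eq_of_invertible₁₁`, whose lower factor is
the transpose of the upper one because `S` is skew. -/
theorem IsAlternating.exists_eq_transpose_mul_fromBlocks_mul {m l : Type*} [Fintype m]
    [Fintype l] [DecidableEq m] [DecidableEq l] {S : Matrix (m ⊕ l) (m ⊕ l) R}
    (hS : S.IsAlternating) (hA : IsUnit S.toBlocks₁₁.det) :
    ∃ (U : Matrix (m ⊕ l) (m ⊕ l) R) (G : Matrix l l R),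
      IsUnit U.det ∧ S = Uᵀ * fromBlocks S.toBlocks₁₁ 0 0 G * U := by
  let := S.toBlocks₁₁.invertibleOfIsUnitDet hA
  refine ⟨fromBlocks 1 (⅟S.toBlocks₁₁ * S.toBlocks₁₂) 0 1,
    S.toBlocks₂₂ - S.toBlocks₂₁ * ⅟S.toBlocks₁₁ * S.toBlocks₁₂, by simp, ?_⟩
  conv_lhs => rw [← fromBlocks_toBlocks S, fromBlocks_eq_of_invertible₁₁]
  rw [fromBlocks_transpose, hS.toBlocks₂₁, transpose_mul,
    transpose_invOf_of_transpose_eq_neg (A := S.toBlocks₁₁) (hS.submatrix Sum.inl).1]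
  simp

end Matrix

theorem Submodule.exists_basis_sumInr_mem {K V : Type*} [Field K] [AddCommGroup V] [Module K V]
    [FiniteDimensional K V] (U : Submodule K V) {m n : ℕ} (hU : finrank K U = n)
    (hV : finrank K V = m + n) : ∃ b : Basis (Fin m ⊕ Fin n) K V, ∀ j, b (.inr j) ∈ U := by
  obtain ⟨W, hUW⟩ := U.exists_isCompl
  have hW : finrank K W = m := by
    have := Submodule.finrank_add_eq_of_isCompl hUW.symm
    omega
  exact ⟨((finBasisOfFinrankEq K W hW).prod (finBasisOfFinrankEq K U hU)).map
    (Submodule.prodEquivOfIsCompl W U hUW.symm), fun j => by simp⟩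

namespace Matrix

theorem isUnit_det_of_rank_eq_card {K n : Type*} [Field K] [Fintype n] [DecidableEq n]
    {A : Matrix n n K} (h : A.rank = Fintype.card n) : IsUnit A.det := by
  have : LinearMap.range A.mulVecLin = ⊤ :=
    Submodule.eq_top_of_finrank_eq (by rw [← rank, h, finrank_fintype_fun_eq_card])
  rw [← isUnit_iff_isUnit_det, ← mulVec_surjective_iff_isUnit]
  exact LinearMap.range_eq_top.mp this

theorem rank_fromBlocks_zero_le {R m n : Type*} [CommRing R] [StrongRankCondition R]
    [Fintype m] [Fintype n] [DecidableEq m] (A : Matrix m m R) :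
    (fromBlocks A 0 0 (0 : Matrix n n R)).rank ≤ A.rank := by
  have : fromBlocks A 0 0 (0 : Matrix n n R) =
      fromRows (1 : Matrix m m R) 0 * A * fromCols 1 (0 : Matrix m n R) := by
    simp only [fromRows_mul, mul_fromCols, Matrix.one_mul, Matrix.zero_mul, Matrix.mul_one,
      Matrix.mul_zero]
    ext (i | i) (j | j) <;> simp
  rw [this]
  exact (rank_mul_le_left _ _).trans (rank_mul_le_right _ _)

theorem exists_isUnit_det_toBlocks₁₁_transpose_mul_mul {K : Type*} [Field K] {m k : ℕ}
    {N : Matrix (Fin m ⊕ Fin k) (Fin m ⊕ Fin k) K} (hN : Nᵀ = -N) (hrank : N.rank = m) :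
    ∃ Q : Matrix (Fin m ⊕ Fin k) (Fin m ⊕ Fin k) K,
      IsUnit Q.det ∧ IsUnit (Qᵀ * N * Q).toBlocks₁₁.det := by
  have hker : finrank K (LinearMap.ker N.mulVecLin) = k := by
    have := LinearMap.finrank_range_add_finrank_ker N.mulVecLin
    rw [← rank, hrank, finrank_fintype_fun_eq_card, Fintype.card_sum, Fintype.card_fin,
      Fintype.card_fin] at this
    omega
  obtain ⟨b, hb⟩ := (LinearMap.ker N.mulVecLin).exists_basis_sumInr_mem (m := m) hker (by simp)
  set Q := (Pi.basisFun K _).toMatrix b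
  have hQ : IsUnit Q.det :=
    let := (Pi.basisFun K _).invertibleToMatrix b
    isUnit_det_of_invertible Q
  have hNQ : ∀ i j, (N * Q) i (.inr j) = 0 := fun i j => by
    simpa [Q, mul_apply, Basis.toMatrix_apply, mulVec, dotProduct] using congrFun (hb j) i
  set S := Qᵀ * N * Q
  have hS_inr : ∀ a j, S a (.inr j) = 0 := fun a j => by
    simp [S, Matrix.mul_assoc, mul_apply (M := Qᵀ), hNQ]
  have hS : S = fromBlocks S.toBlocks₁₁ 0 0 0 := by
    conv_lhs => rw [← fromBlocks_toBlocks S]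
    congr 1 <;> ext i j
    · exact hS_inr _ _
    · have hS_skew : Sᵀ = -S := by simp [S, transpose_mul, hN, Matrix.mul_assoc]
      simpa [hS_inr, toBlocks₂₁] using congrFun₂ hS_skew (.inl j) (.inr i)
    · exact hS_inr _ _
  refine ⟨Q, hQ, isUnit_det_of_rank_eq_card (le_antisymm (rank_le_card_width _) ?_)⟩
  calc Fintype.card (Fin m) = S.rank := by
        rw [rank_mul_eq_left_of_isUnit_det _ _ hQ,
          rank_mul_eq_right_of_isUnit_det _ _ (isUnit_det_transpose _ hQ), hrank,
          Fintype.card_fin]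
    _ ≤ S.toBlocks₁₁.rank := hS ▸ rank_fromBlocks_zero_le _

theorem IsAlternating.exists_eq_transpose_mul_fromBlocks_mul_of_rank_map {R K : Type*}
    [CommRing R] [IsLocalRing R] [Field K] (φ : R →+* K) (hφ : Function.Surjective φ)
    {m k : ℕ} {M : Matrix (Fin m ⊕ Fin k) (Fin m ⊕ Fin k) R} (hM : M.IsAlternating)
    (hrank : (M.map φ).rank = m) :
    ∃ (P : Matrix (Fin m ⊕ Fin k) (Fin m ⊕ Fin k) R) (A : Matrix (Fin m) (Fin m) R)
      (G : Matrix (Fin k) (Fin k) R), IsUnit P.det ∧ IsUnit A.det ∧ G.IsAlternating ∧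
        M = Pᵀ * fromBlocks A 0 0 G * P := by
  have := IsLocalHom.of_surjective φ hφ
  obtain ⟨Q, hQ, hQMQ⟩ := exists_isUnit_det_toBlocks₁₁_transpose_mul_mul
    (by rw [← transpose_map, hM.1]; ext; simp) hrank
  set Q₀ := Q.map (Function.surjInv hφ)
  have hQ₀ : Q₀.map φ = Q := by ext; simp [Q₀, Function.surjInv_eq hφ]
  have hQ₀det : IsUnit Q₀.det :=
    isUnit_of_map_unit φ _ (by rwa [RingHom.map_det, RingHom.mapMatrix_apply, hQ₀])
  set S := Q₀ᵀ * M * Q₀ with hS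
  have hSA : IsUnit S.toBlocks₁₁.det := by
    refine isUnit_of_map_unit φ _ ?_
    rw [RingHom.map_det]
    convert hQMQ
    rw [← hQ₀, ← transpose_map, ← Matrix.map_mul, ← Matrix.map_mul]
    rfl
  obtain ⟨U, G, hU, hSU⟩ := (hM.transpose_mul_mul Q₀).exists_eq_transpose_mul_fromBlocks_mul hSA
  rw [← hS] at hSU
  have hP : IsUnit (U * Q₀⁻¹).det := by
    rw [det_mul, det_nonsing_inv]
    exact hU.mul hQ₀det.ringInverse
  have hMP : M = (U * Q₀⁻¹)ᵀ * fromBlocks S.toBlocks₁₁ 0 0 G * (U * Q₀⁻¹) := by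
    have hQ₀T : Q₀⁻¹ᵀ * Q₀ᵀ = 1 := by
      rw [← transpose_mul, mul_nonsing_inv _ hQ₀det, transpose_one]
    calc M = Q₀⁻¹ᵀ * S * Q₀⁻¹ := by
          simp only [S, Matrix.mul_assoc, mul_nonsing_inv _ hQ₀det, Matrix.mul_one,
            ← Matrix.mul_assoc Q₀⁻¹ᵀ, hQ₀T, Matrix.one_mul]
      _ = _ := by
          conv_lhs => rw [hSU]
          rw [transpose_mul]
          simp only [Matrix.mul_assoc]
  refine ⟨U * Q₀⁻¹, S.toBlocks₁₁, G, hP, hSA, ?_, hMP⟩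
  convert (hM.of_eq_transpose_mul_mul hP hMP).submatrix Sum.inr
  ext
  simp

variable {R : Type*} [CommRing R] {n : Type*}

theorem vecMul_eq_zero_iff_of_isUnit_det [Fintype n] [DecidableEq n] {A : Matrix n n R}
    (hA : IsUnit A.det) {x : n → R} : x ᵥ* A = 0 ↔ x = 0 :=
  ⟨fun h => by simpa [vecMul_vecMul, mul_nonsing_inv _ hA] using congrArg (· ᵥ* A⁻¹) h,
    by rintro rfl; exact zero_vecMul A⟩

theorem isUnit_det_map {S : Type*} [CommRing S] [Fintype n] [DecidableEq n] (f : R →+* S)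
    {A : Matrix n n R} (hA : IsUnit A.det) : IsUnit (A.map f).det := by
  rw [← RingHom.mapMatrix_apply, ← RingHom.map_det]
  exact hA.map f

theorem card_vecMul_submatrix_eq_zero [Fintype n] {m : Type*} [Fintype m] (M : Matrix n n R)
    (e : m ≃ n) :
    Nat.card {x : m → R // x ᵥ* M.submatrix e e = 0} = Nat.card {x : n → R // x ᵥ* M = 0} := by
  refine Nat.card_congr (Equiv.subtypeEquiv (e.arrowCongr (Equiv.refl R)) fun x => ?_)
  rw [submatrix_vecMul_equiv]
  simp only [funext_iff, Function.comp_apply, Pi.zero_apply]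
  exact e.forall_congr_right (q := fun b => (x ∘ e.symm ᵥ* M) b = 0)

theorem card_vecMul_transpose_mul_mul_eq_zero [Fintype n] [DecidableEq n] {P : Matrix n n R}
    (hP : IsUnit P.det) (D : Matrix n n R) :
    Nat.card {x : n → R // x ᵥ* (Pᵀ * D * P) = 0} = Nat.card {x : n → R // x ᵥ* D = 0} := by
  have hPt := isUnit_det_transpose P hP
  let e : (n → R) ≃ (n → R) :=
    { toFun := (· ᵥ* Pᵀ)
      invFun := (· ᵥ* Pᵀ⁻¹)
      left_inv := fun x => by simp [vecMul_vecMul, mul_nonsing_inv _ hPt]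
      right_inv := fun x => by simp [vecMul_vecMul, nonsing_inv_mul _ hPt] }
  refine Nat.card_congr (Equiv.subtypeEquiv e fun x => ?_)
  change _ ↔ (x ᵥ* Pᵀ) ᵥ* D = 0
  rw [← vecMul_eq_zero_iff_of_isUnit_det hP (x := x ᵥ* Pᵀ ᵥ* D)]
  simp only [vecMul_vecMul, Matrix.mul_assoc]

theorem card_vecMul_fromBlocks_eq_zero {m l : Type*} [Fintype m] [Fintype l] [DecidableEq m]
    {A : Matrix m m R} (hA : IsUnit A.det) (G : Matrix l l R) :
    Nat.card {x : m ⊕ l → R // x ᵥ* fromBlocks A 0 0 G = 0} =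
      Nat.card {y : l → R // y ᵥ* G = 0} := by
  have hx : ∀ x : m ⊕ l → R,
      x ᵥ* fromBlocks A 0 0 G = 0 ↔ x ∘ Sum.inl = 0 ∧ (x ∘ Sum.inr) ᵥ* G = 0 := fun x => by
    rw [vecMul_fromBlocks, ← vecMul_eq_zero_iff_of_isUnit_det hA]
    simp [funext_iff, Sum.forall]
  refine Nat.card_congr
    { toFun := fun x => ⟨x.1 ∘ Sum.inr, ((hx x.1).mp x.2).2⟩
      invFun := fun y => ⟨Sum.elim 0 y.1, (hx _).mpr ⟨rfl, y.2⟩⟩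
      left_inv := fun x => Subtype.ext <| funext fun
        | .inl i => (congrFun ((hx x.1).mp x.2).1 i).symm
        | .inr _ => rfl
      right_inv := fun y => rfl }

theorem card_vecMul_fin_two_eq_zero (a : R) :
    Nat.card {x : Fin 2 → R // x ᵥ* !![0, a; -a, 0] = 0} =
      Nat.card {t : R // t * a = 0} ^ 2 := by
  rw [sq, ← Nat.card_prod]
  refine Nat.card_congr ((Equiv.subtypeEquiv (finTwoArrowEquiv R) fun x => ?_).trans
    (Equiv.subtypeProdEquivProd (p := fun t => t * a = 0) (q := fun t => t * a = 0)))
  simpa [funext_iff, Fin.forall_fin_two, vecHead, vecTail] using and_comm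

theorem card_vecMul_map_transpose_mul_fromBlocks_mul_eq_zero {S : Type*} [CommRing S]
    {m : Type*} [Fintype m] [DecidableEq m] (f : R →+* S) {P : Matrix (m ⊕ Fin 2) (m ⊕ Fin 2) R}
    {A : Matrix m m R} (hP : IsUnit P.det) (hA : IsUnit A.det) (g : R) :
    Nat.card {x : m ⊕ Fin 2 → S // x ᵥ* (Pᵀ * fromBlocks A 0 0 !![0, g; -g, 0] * P).map f = 0} =
      Nat.card {t : S // t * f g = 0} ^ 2 := by
  rw [Matrix.map_mul, Matrix.map_mul, transpose_map,
    card_vecMul_transpose_mul_mul_eq_zero (isUnit_det_map f hP), fromBlocks_map,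
    Matrix.map_zero _ (map_zero f), Matrix.map_zero _ (map_zero f),
    card_vecMul_fromBlocks_eq_zero (isUnit_det_map f hA),
    show !![0, g; -g, 0].map f = !![0, f g; -f g, 0] by
      ext i j
      fin_cases i <;> fin_cases j <;> simp,
    card_vecMul_fin_two_eq_zero]

end Matrix

theorem Nat.pow_dvd_mul_pow_iff {p : ℕ} (hp : p ≠ 0) (r k a : ℕ) :
    p ^ r ∣ a * p ^ k ↔ p ^ (r - min r k) ∣ a := by
  rcases le_total r k with h | h
  · simpa [h] using (pow_dvd_pow p h).trans (dvd_mul_left _ a)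
  · obtain ⟨c, rfl⟩ : ∃ c, r = c + k := ⟨r - k, by omega⟩
    rw [min_eq_right h, Nat.add_sub_cancel, pow_add,
      Nat.mul_dvd_mul_iff_right (pow_pos (Nat.pos_of_ne_zero hp) k)]

theorem ZMod.card_mul_pow_eq_zero {p : ℕ} (hp : p ≠ 0) (r k : ℕ) :
    Nat.card {t : ZMod (p ^ r) // t * (p : ZMod (p ^ r)) ^ k = 0} = p ^ min r k := by
  have := NeZero.mk (pow_ne_zero r hp)
  have := NeZero.mk (pow_ne_zero (r - min r k) hp)
  -- the solutions form the kernel of the reduction modulo `p ^ (r - min r k)`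
  let f := ZMod.castHom (pow_dvd_pow p (Nat.sub_le r (min r k))) (ZMod (p ^ (r - min r k)))
  have hker : ∀ t : ZMod (p ^ r), t * (p : ZMod (p ^ r)) ^ k = 0 ↔ t ∈ f.toAddMonoidHom.ker := by
    intro t
    rw [AddMonoidHom.mem_ker, RingHom.toAddMonoidHom_eq_coe, AddMonoidHom.coe_coe,
      ZMod.castHom_apply, ZMod.cast_eq_val, ZMod.natCast_eq_zero_iff,
      ← Nat.pow_dvd_mul_pow_iff hp, ← ZMod.natCast_eq_zero_iff]
    push_cast [ZMod.natCast_val, ZMod.cast_id]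
    rfl
  have hcard := f.toAddMonoidHom.ker.card_mul_index
  rw [AddSubgroup.index_ker, AddMonoidHom.range_eq_top.mpr (ZMod.ringHom_surjective f),
    AddSubgroup.card_top, Nat.card_zmod, Nat.card_zmod] at hcard
  rw [Nat.card_congr (Equiv.subtypeEquivRight hker)]
  exact Nat.eq_of_mul_eq_mul_right (pow_pos (Nat.pos_of_ne_zero hp) _)
    (hcard.trans (pow_mul_pow_sub p (min_le_left r k)).symm)

namespace PadicInt

variable {p : ℕ} [Fact p.Prime]

theorem valuation_mul_of_isUnit {u : ℤ_[p]} (hu : IsUnit u) (x : ℤ_[p]) :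
    (u * x).valuation = x.valuation := by
  rcases eq_or_ne x 0 with rfl | hx
  · simp
  obtain ⟨u, rfl⟩ := hu
  have : (u : ℤ_[p]).valuation + (↑u⁻¹ : ℤ_[p]).valuation = 0 := by
    rw [← valuation_mul u.ne_zero u⁻¹.ne_zero, u.mul_inv, valuation_one]
  rw [valuation_mul u.ne_zero hx]
  omega

theorem card_mul_toZModPow_eq_zero {g : ℤ_[p]} (hg : g ≠ 0) (r : ℕ) :
    Nat.card {t : ZMod (p ^ r) // t * toZModPow r g = 0} = p ^ min r g.valuation := by
  have hu : IsUnit (toZModPow r (unitCoeff hg : ℤ_[p])) := (unitCoeff hg).isUnit.map _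
  rw [← ZMod.card_mul_pow_eq_zero (Fact.out : p.Prime).ne_zero]
  refine Nat.card_congr (Equiv.subtypeEquivRight fun t => ?_)
  conv_lhs => rw [unitCoeff_spec hg, map_mul, map_pow, map_natCast, mul_left_comm,
    hu.mul_right_eq_zero]

end PadicInt

/-- For an alternating `d × d` matrix `M` over `ℤ_p` (with `d` even) of nonzero
determinant whose reduction mod `p` has rank `d - 2`, the number of solutions of
`x · M ≡ 0 mod p^r` is `p ^ min (2r, v_p(det M))`. -/
theorem stmt3 (p : ℕ) [Fact p.Prime] (d : ℕ) (hd : 0 < d) (hdeven : Even d)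
    (M : Matrix (Fin d) (Fin d) ℤ_[p])
    (halt : Mᵀ = -M) (hdiag : ∀ i, M i i = 0)
    (hdet : M.det ≠ 0)
    (hrank : (M.map (fun a => PadicInt.toZMod a)).rank = d - 2)
    (r : ℕ) :
    Nat.card {x : Fin d → ZMod (p ^ r) //
        Matrix.vecMul x (M.map (fun a => PadicInt.toZModPow r a)) = 0}
      = p ^ min (2 * r) (M.det.valuation) := by
  obtain ⟨m, rfl⟩ : ∃ m, d = m + 2 := ⟨d - 2, by obtain ⟨t, ht⟩ := hdeven; omega⟩
  let e : Fin m ⊕ Fin 2 ≃ Fin (m + 2) := finSumFinEquiv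
  obtain ⟨P, A, G, hP, hA, hG, hPAG⟩ :=
    (IsAlternating.submatrix ⟨halt, hdiag⟩ e).exists_eq_transpose_mul_fromBlocks_mul_of_rank_map
      PadicInt.toZMod (ZMod.ringHom_surjective _)
      (by simpa [← submatrix_map, rank_submatrix] using hrank)
  rw [hG.fin_two] at hPAG
  set g := G 0 1
  have hdetM : M.det = P.det * P.det * A.det * g ^ 2 := by
    rw [← det_submatrix_equiv_self e M, hPAG, det_mul, det_mul, det_transpose,
      det_fromBlocks_zero₂₁, det_fin_two_of]
    ring
  have hg : g ≠ 0 := fun hg => hdet (by simp [hdetM, hg])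
  have hv : M.det.valuation = 2 * g.valuation := by
    rw [hdetM, PadicInt.valuation_mul_of_isUnit ((hP.mul hP).mul hA), PadicInt.valuation_pow]
  change Nat.card {x // x ᵥ* M.map (PadicInt.toZModPow r) = 0} = _
  rw [← card_vecMul_submatrix_eq_zero _ e, submatrix_map, hPAG,
    card_vecMul_map_transpose_mul_fromBlocks_mul_eq_zero _ hP hA,
    PadicInt.card_mul_toZModPow_eq_zero hg, ← pow_mul, hv]
  congr 1
  omega
end

section
/- Let p be a prime, d an even positive integer, and let M be a d×d matrix over the ring ℤ_p of p-adic integers which is alternating (Mᵀ = −M and all diagonal entries are 0), satisfies det M ≠ 0, and whose reduction modulo p has rank d−2 as a matrix over F_p. Then the p-adic valuation of det M is an even number 2e, and there exist matrices U, V ∈ GL_d(ℤ_p) such that U·M·V is the diagonal matrix whose first d−2 diagonal entries equal 1 and whose last two diagonal entries both equal p^e. -/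
/-!
Over `F_p`, a row basis of the alternating matrix `M mod p` indexes a nonsingular principal
minor of size `d - 2`. Its lift `A` is invertible over `ℤ_p`, so block elimination makes `M`
equivalent to `1 ⊕ S`, where the Schur complement `S` is again alternating, i.e.
`S = !![0, b; -b, 0]`. Writing `b = u p^e` with `u` a unit, `S` is equivalent to `p^e • 1`, and
`det M` is associated to `p^(2e)`.
-/

open Matrix

theorem Function.Injective.exists_sumEquiv {α β γ : Type*} [Fintype α] [Fintype β] [Fintype γ]
    {f : α → β} (hf : Function.Injective f)
    (h : Fintype.card α + Fintype.card γ = Fintype.card β) :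
    ∃ ρ : α ⊕ γ ≃ β, ∀ a, ρ (Sum.inl a) = f a := by
  classical
  have hcard : Fintype.card γ = Fintype.card {b // b ∉ Set.range f} := by
    rw [Fintype.card_subtype_compl, Set.card_range_of_injective hf]
    omega
  exact ⟨((Equiv.ofInjective f hf).sumCongr (Fintype.equivOfCardEq hcard)).trans
    (Equiv.sumCompl (· ∈ Set.range f)), fun _ => rfl⟩

namespace Matrix

section Equivalent

variable {R : Type*} [CommRing R] {m n m' n' : Type*} [Fintype m] [DecidableEq m]
  [Fintype n] [DecidableEq n]

def Equivalent (M N : Matrix m n R) : Prop :=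
  ∃ U : Matrix m m R, ∃ V : Matrix n n R, IsUnit U.det ∧ IsUnit V.det ∧ U * M * V = N

namespace Equivalent

theorem refl (M : Matrix m n R) : Equivalent M M :=
  ⟨1, 1, by simp, by simp, by simp⟩

theorem trans {M N P : Matrix m n R} (h₁ : Equivalent M N) (h₂ : Equivalent N P) :
    Equivalent M P := by
  obtain ⟨U₁, V₁, hU₁, hV₁, rfl⟩ := h₁
  obtain ⟨U₂, V₂, hU₂, hV₂, rfl⟩ := h₂
  exact ⟨U₂ * U₁, V₁ * V₂, by simpa using hU₂.mul hU₁, by simpa using hV₁.mul hV₂,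
    by simp only [Matrix.mul_assoc]⟩

theorem associated_det {M N : Matrix m m R} (h : Equivalent M N) :
    Associated M.det N.det := by
  obtain ⟨U, V, ⟨u, hu⟩, ⟨v, hv⟩, rfl⟩ := h
  exact ⟨u * v, by simp [hu, hv]; ring⟩

variable [Fintype m'] [DecidableEq m'] [Fintype n'] [DecidableEq n']

theorem submatrix {M N : Matrix m n R} (h : Equivalent M N) (e : m' ≃ m) (e' : n' ≃ n) :
    Equivalent (M.submatrix e e') (N.submatrix e e') := by
  obtain ⟨U, V, hU, hV, rfl⟩ := h
  exact ⟨U.submatrix e e, V.submatrix e' e', by simpa using hU, by simpa using hV,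
    by simp only [submatrix_mul_equiv]⟩

theorem fromBlocks_zero {A A' : Matrix m m' R} {D D' : Matrix n n' R}
    (hA : Equivalent A A') (hD : Equivalent D D') :
    Equivalent (fromBlocks A 0 0 D) (fromBlocks A' 0 0 D') := by
  obtain ⟨U, V, hU, hV, rfl⟩ := hA
  obtain ⟨U', V', hU', hV', rfl⟩ := hD
  exact ⟨fromBlocks U 0 0 U', fromBlocks V 0 0 V', by simpa using hU.mul hU',
    by simpa using hV.mul hV', by simp [fromBlocks_multiply]⟩

end Equivalent

theorem equivalent_submatrix_perm (M : Matrix m n R) (σ : Equiv.Perm m) (τ : Equiv.Perm n) :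
    Equivalent M (M.submatrix σ τ) := by
  refine ⟨(1 : Matrix m m R).submatrix σ (Equiv.refl m),
    (1 : Matrix n n R).submatrix (Equiv.refl n) τ, ?_, ?_, ?_⟩
  · simpa [det_permute] using (Equiv.Perm.sign σ).isUnit.map (Int.castRingHom R)
  · simpa [det_permute'] using (Equiv.Perm.sign τ).isUnit.map (Int.castRingHom R)
  · rw [one_submatrix_mul, mul_submatrix_one]
    simp

theorem equivalent_fromBlocks_schur (A : Matrix m m R) (B : Matrix m n R) (C : Matrix n m R)
    (D : Matrix n n R) (hA : IsUnit A.det) :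
    Equivalent (fromBlocks A B C D) (fromBlocks 1 0 0 (D - C * A⁻¹ * B)) := by
  refine ⟨fromBlocks A⁻¹ 0 (-(C * A⁻¹)) 1, fromBlocks 1 (-(A⁻¹ * B)) 0 1, ?_, ?_, ?_⟩
  · simpa [det_fromBlocks_zero₁₂] using (isUnit_nonsing_inv_det A hA)
  · simp
  · simp [fromBlocks_multiply, nonsing_inv_mul A hA, Matrix.mul_assoc, sub_eq_neg_add]

end Equivalent

section Field

variable {K : Type*} [Field K] {n κ : Type*}

theorem isUnit_det_submatrix_of_transpose_eq_neg [Fintype κ] [DecidableEq κ] {B : Matrix n n K}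
    (hB : Bᵀ = -B) {f : κ → n}
    (hspan : Submodule.span K (Set.range (B.row ∘ f)) = Submodule.span K (Set.range B.row))
    (hli : LinearIndependent K (B.row ∘ f)) : IsUnit (B.submatrix f f).det := by
  have hmem : ∀ i, B i ∈ Submodule.span K (Set.range (B.row ∘ f)) := fun i =>
    hspan ▸ Submodule.subset_span (Set.mem_range_self i)
  choose c hc using fun i => (Submodule.mem_span_range_iff_exists_fun K).1 (hmem i)
  have hBc : B = of c * B.submatrix f id := by
    ext i j
    simp [mul_apply, ← hc i, Finset.sum_apply]
  -- by skewness, `B = c * B_{f,·}` turns into `B_{f,·} = -(B_ff)ᵀ cᵀ`, so the independence of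
  -- the rows `f` makes `(B_ff)ᵀ` injective
  have hrows : B.submatrix f id = -((B.submatrix f f)ᵀ * (of c)ᵀ) := by
    conv_lhs => rw [← neg_neg B, ← hB, hBc]
    ext i j
    simp [transpose_mul, mul_apply]
  rw [← isUnit_iff_isUnit_det, ← isUnit_transpose, ← vecMul_injective_iff_isUnit]
  have hinj : Function.Injective (B.submatrix f id).vecMul := vecMul_injective_iff.2 hli
  intro x y hxy
  apply hinj
  simp only [hrows, vecMul_neg, ← vecMul_vecMul, hxy]

theorem exists_isUnit_det_submatrix_of_transpose_eq_neg [Fintype n] {B : Matrix n n K}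
    (hB : Bᵀ = -B) {r : ℕ} (hr : B.rank = r) :
    ∃ f : Fin r → n, Function.Injective f ∧ IsUnit (B.submatrix f f).det := by
  classical
  obtain ⟨κ, a, ha, hspan, hli⟩ := exists_linearIndependent' K B.row
  have : Fintype κ := Fintype.ofInjective a ha
  have hcard : Fintype.card κ = r := by
    rw [← finrank_span_eq_card hli, hspan, ← rank_eq_finrank_span_row, hr]
  let e := Fintype.equivFinOfCardEq hcard
  refine ⟨a ∘ e.symm, ha.comp e.symm.injective, ?_⟩
  rw [← submatrix_submatrix, det_submatrix_equiv_self]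
  exact isUnit_det_submatrix_of_transpose_eq_neg hB hspan hli

end Field

variable {R : Type*} [CommRing R] {m n : Type*} [Fintype m] [DecidableEq m]

theorem transpose_schur_eq_neg {A : Matrix m m R} {B : Matrix m n R} {C : Matrix n m R}
    {D : Matrix n n R} (h : (fromBlocks A B C D)ᵀ = -fromBlocks A B C D) (hA : IsUnit A.det) :
    (D - C * A⁻¹ * B)ᵀ = -(D - C * A⁻¹ * B) := by
  rw [fromBlocks_transpose, fromBlocks_neg, fromBlocks_inj] at h
  obtain ⟨hAt, hCt, hBt, hDt⟩ := h
  have hAinv : (A⁻¹)ᵀ = -A⁻¹ := by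
    rw [transpose_nonsing_inv, hAt]
    exact inv_eq_right_inv (by simp [mul_nonsing_inv A hA])
  simp [transpose_mul, hAinv, hBt, hCt, hDt, Matrix.mul_assoc]
  abel

theorem eq_of_transpose_eq_neg_fin_two [NoZeroDivisors R] [CharZero R]
    {S : Matrix (Fin 2) (Fin 2) R} (h : Sᵀ = -S) : S = !![0, S 0 1; -S 0 1, 0] := by
  have hS : ∀ i j, S j i = -S i j := fun i j => congr_fun₂ h i j
  ext i j
  fin_cases i <;> fin_cases j
  · simpa [CharZero.eq_neg_self_iff] using hS 0 0
  · rfl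
  · simpa using hS 0 1
  · simpa [CharZero.eq_neg_self_iff] using hS 1 1

theorem submatrix_finSumFinEquiv_fromBlocks_one_diagonal {r k : ℕ} (c : R) :
    (fromBlocks (1 : Matrix (Fin r) (Fin r) R) 0 0 (diagonal fun _ : Fin k => c)).submatrix
        finSumFinEquiv.symm finSumFinEquiv.symm =
      diagonal fun i : Fin (r + k) => if (i : ℕ) < r then 1 else c := by
  rw [← diagonal_one, fromBlocks_diagonal, submatrix_diagonal_equiv]
  congr 1
  funext i
  refine Fin.addCases (fun i => ?_) (fun j => ?_) i <;> simp

end Matrix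

namespace PadicInt
variable {p : ℕ} [Fact p.Prime]

theorem isUnit_of_isUnit_toZMod {x : ℤ_[p]} (h : IsUnit (toZMod x)) : IsUnit x := by
  by_contra hx
  have : x ∈ RingHom.ker (toZMod : ℤ_[p] →+* ZMod p) :=
    (ker_toZMod (p := p)) ▸ (IsLocalRing.mem_maximalIdeal x).2 hx
  exact h.ne_zero this

theorem valuation_eq_of_associated_pow {x : ℤ_[p]} {k : ℕ}
    (h : Associated ((p : ℤ_[p]) ^ k) x) : x.valuation = k := by
  obtain ⟨u, rfl⟩ := h
  have hu : (u : ℤ_[p]).valuation + (↑u⁻¹ : ℤ_[p]).valuation = 0 := by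
    rw [← valuation_mul u.ne_zero u⁻¹.ne_zero, Units.mul_inv, valuation_one]
  rw [valuation_p_pow_mul _ _ u.ne_zero]
  omega

theorem equivalent_skew_fin_two {b : ℤ_[p]} (hb : b ≠ 0) :
    Equivalent !![0, b; -b, 0] (diagonal fun _ : Fin 2 => (p : ℤ_[p]) ^ b.valuation) := by
  let w : ℤ_[p] := ↑(unitCoeff hb)⁻¹
  have hbw : b * w = (p : ℤ_[p]) ^ b.valuation := by
    conv_lhs => rw [unitCoeff_spec hb]
    simp [w, mul_right_comm]
  refine ⟨1, !![0, -w; w, 0], by simp, by simp [det_fin_two_of, w], ?_⟩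
  ext i j
  fin_cases i <;> fin_cases j <;> simp [hbw]

theorem exists_equivalent_fromBlocks_one_diagonal_pow {m : Type*} [Fintype m] [DecidableEq m]
    {N : Matrix (m ⊕ Fin 2) (m ⊕ Fin 2) ℤ_[p]} (hskew : Nᵀ = -N)
    (hA : IsUnit N.toBlocks₁₁.det) (hdet : N.det ≠ 0) :
    ∃ e : ℕ, Equivalent N (fromBlocks 1 0 0 (diagonal fun _ : Fin 2 => (p : ℤ_[p]) ^ e)) := by
  obtain ⟨A, B, C, D, rfl⟩ : ∃ A B C D, N = fromBlocks A B C D :=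
    ⟨_, _, _, _, (fromBlocks_toBlocks N).symm⟩
  rw [toBlocks_fromBlocks₁₁] at hA
  have hschur := equivalent_fromBlocks_schur A B C D hA
  rw [eq_of_transpose_eq_neg_fin_two (transpose_schur_eq_neg hskew hA)] at hschur
  set b := (D - C * A⁻¹ * B) 0 1
  have hb : b ≠ 0 := by
    intro hb
    apply hdet
    simpa [hb, det_fromBlocks_zero₂₁] using hschur.associated_det
  exact ⟨_, hschur.trans ((Equivalent.refl 1).fromBlocks_zero (equivalent_skew_fin_two hb))⟩

theorem exists_equivalent_submatrix_fromBlocks_one_diagonal_pow {n : Type*} [Fintype n]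
    [DecidableEq n] {M : Matrix n n ℤ_[p]} (hskew : Mᵀ = -M) (hdet : M.det ≠ 0) {r : ℕ}
    (hr : (M.map toZMod).rank = r) (hcard : Fintype.card n = r + 2) :
    ∃ (ρ : Fin r ⊕ Fin 2 ≃ n) (e : ℕ),
      Equivalent (M.submatrix ρ ρ)
        (fromBlocks 1 0 0 (diagonal fun _ : Fin 2 => (p : ℤ_[p]) ^ e)) := by
  have hskew_mod : (M.map toZMod)ᵀ = -M.map toZMod := by
    rw [← transpose_map, hskew, Matrix.map_neg _ (map_neg _)]
  obtain ⟨f, hf, hfdet⟩ := exists_isUnit_det_submatrix_of_transpose_eq_neg hskew_mod hr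
  obtain ⟨ρ, hρ⟩ := hf.exists_sumEquiv (γ := Fin 2) (by simp [hcard])
  have hA : IsUnit (M.submatrix ρ ρ).toBlocks₁₁.det := by
    have : (M.submatrix ρ ρ).toBlocks₁₁ = M.submatrix f f := by
      ext
      simp [toBlocks₁₁, hρ]
    rw [this]
    apply isUnit_of_isUnit_toZMod
    rwa [RingHom.map_det]
  refine ⟨ρ, exists_equivalent_fromBlocks_one_diagonal_pow ?_ hA ?_⟩
  · rw [transpose_submatrix, hskew]
    rfl
  · rwa [det_submatrix_equiv_self]

end PadicInt

theorem stmt4_general (p : ℕ) [Fact p.Prime] (d : ℕ) (hd : 0 < d) (hdeven : Even d)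
    (M : Matrix (Fin d) (Fin d) ℤ_[p])
    (halt : Mᵀ = -M)
    (hdet : M.det ≠ 0)
    (hrank : (M.map (fun a => PadicInt.toZMod a)).rank = d - 2) :
    ∃ e : ℕ, M.det.valuation = 2 * (e : ℤ) ∧
      ∃ U V : Matrix (Fin d) (Fin d) ℤ_[p],
        IsUnit U.det ∧ IsUnit V.det ∧
        U * M * V = Matrix.diagonal (fun i : Fin d =>
          if (i : ℕ) < d - 2 then 1 else (p : ℤ_[p]) ^ e) := by
  obtain ⟨r, rfl⟩ : ∃ r, d = r + 2 := by
    obtain ⟨k, rfl⟩ := hdeven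
    exact ⟨k + k - 2, by omega⟩
  rw [Nat.add_sub_cancel] at hrank ⊢
  obtain ⟨ρ, e, he⟩ :=
    PadicInt.exists_equivalent_submatrix_fromBlocks_one_diagonal_pow halt hdet hrank (by simp)
  refine ⟨e, ?_, ?_⟩
  · have h := he.associated_det
    rw [det_submatrix_equiv_self, det_fromBlocks_zero₂₁] at h
    have : M.det.valuation = 2 * e :=
      PadicInt.valuation_eq_of_associated_pow (by rw [pow_mul']; simpa using h.symm)
    exact_mod_cast this
  · have h := he.submatrix finSumFinEquiv.symm finSumFinEquiv.symm
    rw [submatrix_finSumFinEquiv_fromBlocks_one_diagonal, submatrix_submatrix] at h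
    exact (equivalent_submatrix_perm M (finSumFinEquiv.symm.trans ρ)
      (finSumFinEquiv.symm.trans ρ)).trans h

/-- An alternating `d × d` matrix over `ℤ_p` (with `d` even) of nonzero determinant
whose reduction mod `p` has rank `d - 2` has determinant of even valuation `2e`, and
Smith normal form `diag(1, …, 1, p^e, p^e)`. -/
theorem stmt4 (p : ℕ) [Fact p.Prime] (d : ℕ) (hd : 0 < d) (hdeven : Even d)
    (M : Matrix (Fin d) (Fin d) ℤ_[p])
    (halt : Mᵀ = -M) (hdiag : ∀ i, M i i = 0)
    (hdet : M.det ≠ 0)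
    (hrank : (M.map (fun a => PadicInt.toZMod a)).rank = d - 2) :
    ∃ e : ℕ, M.det.valuation = 2 * (e : ℤ) ∧
      ∃ U V : Matrix (Fin d) (Fin d) ℤ_[p],
        IsUnit U.det ∧ IsUnit V.det ∧
        U * M * V = Matrix.diagonal (fun i : Fin d =>
          if (i : ℕ) < d - 2 then 1 else (p : ℤ_[p]) ^ e) :=
  stmt4_general p d hd hdeven M halt hdet hrank
end

section
/- Let p be a prime, d ≥ 1, and let M and N be d×d matrices over the ring ℤ_p of p-adic integers such that the reduction of N modulo p is an invertible matrix over F_p. Then for all natural numbers r and s, the number of row vectors x ∈ (ℤ/p^{r+s}ℤ)^d satisfying both x·M̄ = 0 (where M̄ is the reduction of M modulo p^{r+s}) and x̄·N̄ = 0 (where x̄ ∈ (ℤ/p^sℤ)^d is the image of x under the canonical projection and N̄ is the reduction of N modulo p^s) equals the number of row vectors y ∈ (ℤ/p^rℤ)^d satisfying y·M̃ = 0, where M̃ is the reduction of M modulo p^r. -/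
section aux

variable (p : ℕ) [Fact p.Prime]

private lemma stmt5_aux_ne (k : ℕ) : (p : ℕ) ^ k ≠ 0 :=
  pow_ne_zero k (Fact.out : p.Prime).ne_zero

private lemma stmt5_mul_pow_eq_zero_iff (r s : ℕ) (c : ZMod (p ^ (r + s))) :
    (p : ZMod (p ^ (r + s))) ^ s * c = 0 ↔ ((c.val : ZMod (p ^ r)) = 0) := by
  have hp : p ≠ 0 := (Fact.out : p.Prime).ne_zero
  haveI : NeZero (p ^ (r + s)) := ⟨stmt5_aux_ne p _⟩
  have hc : ((c.val : ℕ) : ZMod (p ^ (r + s))) = c := ZMod.natCast_rightInverse c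
  have e1 : (p : ZMod (p ^ (r + s))) ^ s * c = (((p : ℕ) ^ s * c.val : ℕ) : ZMod (p ^ (r + s))) := by
    rw [Nat.cast_mul, Nat.cast_pow, hc]
  have e2 : ((c.val : ZMod (p ^ r)) = 0) ↔ (p : ℕ) ^ r ∣ c.val :=
    ZMod.natCast_eq_zero_iff _ _
  rw [e1, ZMod.natCast_eq_zero_iff, e2]
  generalize c.val = m
  rw [pow_add, mul_comm ((p : ℕ) ^ r) (p ^ s)]
  exact mul_dvd_mul_iff_left (pow_ne_zero s hp)

private lemma stmt5_exists_of_cast_eq_zero (r s : ℕ) (c : ZMod (p ^ (r + s)))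
    (h : (c.val : ZMod (p ^ s)) = 0) :
    ∃ a : ZMod (p ^ r),
      (p : ZMod (p ^ (r + s))) ^ s * ((a.val : ℕ) : ZMod (p ^ (r + s))) = c := by
  have hp : p ≠ 0 := (Fact.out : p.Prime).ne_zero
  haveI : NeZero (p ^ (r + s)) := ⟨stmt5_aux_ne p _⟩
  haveI : NeZero (p ^ s) := ⟨stmt5_aux_ne p _⟩
  rw [ZMod.natCast_eq_zero_iff] at h
  obtain ⟨t, ht⟩ := h
  refine ⟨(t : ZMod (p ^ r)), ?_⟩
  rw [ZMod.val_natCast]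
  have key : (p : ℕ) ^ s * (t % p ^ r) + p ^ (r + s) * (t / p ^ r) = c.val := by
    have hrs : (p : ℕ) ^ (r + s) = p ^ s * p ^ r := by ring
    calc (p : ℕ) ^ s * (t % p ^ r) + p ^ (r + s) * (t / p ^ r)
        = p ^ s * (t % p ^ r + p ^ r * (t / p ^ r)) := by rw [hrs]; ring
      _ = p ^ s * t := by rw [Nat.mod_add_div]
      _ = c.val := ht.symm
  calc (p : ZMod (p ^ (r + s))) ^ s * ((t % p ^ r : ℕ) : ZMod (p ^ (r + s)))
      = (((p : ℕ) ^ s * (t % p ^ r) + p ^ (r + s) * (t / p ^ r) : ℕ) : ZMod (p ^ (r + s))) := by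
        rw [Nat.cast_add, Nat.cast_mul, Nat.cast_mul, ZMod.natCast_self, zero_mul, add_zero,
          Nat.cast_pow]
    _ = c := by rw [key]; exact ZMod.natCast_rightInverse c

private lemma stmt5_inj_aux (r s : ℕ) (a b : ZMod (p ^ r))
    (h : (p : ZMod (p ^ (r + s))) ^ s * ((a.val : ℕ) : ZMod (p ^ (r + s)))
        = (p : ZMod (p ^ (r + s))) ^ s * ((b.val : ℕ) : ZMod (p ^ (r + s)))) : a = b := by
  have hp : p ≠ 0 := (Fact.out : p.Prime).ne_zero
  haveI : NeZero (p ^ r) := ⟨stmt5_aux_ne p _⟩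
  have h' : (((p : ℕ) ^ s * a.val : ℕ) : ZMod (p ^ (r + s)))
      = (((p : ℕ) ^ s * b.val : ℕ) : ZMod (p ^ (r + s))) := by push_cast; exact h
  rw [ZMod.natCast_eq_natCast_iff] at h'
  have hmod : (p : ℕ) ^ (r + s) = p ^ s * p ^ r := by ring
  rw [hmod] at h'
  have h2 := Nat.ModEq.mul_left_cancel' (pow_ne_zero s hp) h'
  apply ZMod.val_injective
  have h3 : a.val % p ^ r = b.val % p ^ r := h2
  rwa [Nat.mod_eq_of_lt a.val_lt, Nat.mod_eq_of_lt b.val_lt] at h3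

private lemma stmt5_unit_aux (d : ℕ) (N : Matrix (Fin d) (Fin d) ℤ_[p])
    (hN : IsUnit (N.map (fun a => PadicInt.toZMod a))) (s : ℕ) :
    IsUnit (N.map (fun a => PadicInt.toZModPow s a)) := by
  have hNU : IsUnit N := by
    rw [Matrix.isUnit_iff_isUnit_det]
    rw [Matrix.isUnit_iff_isUnit_det] at hN
    have heq : (N.map fun a => PadicInt.toZMod a) = (PadicInt.toZMod (p := p)).mapMatrix N := rfl
    rw [heq, ← RingHom.map_det] at hN
    by_contra hc
    have hm : N.det ∈ IsLocalRing.maximalIdeal ℤ_[p] :=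
      (IsLocalRing.mem_maximalIdeal _).mpr hc
    rw [← PadicInt.ker_toZMod, RingHom.mem_ker] at hm
    rw [hm] at hN
    exact not_isUnit_zero hN
  have heq : (N.map fun a => PadicInt.toZModPow s a)
      = (PadicInt.toZModPow (p := p) s).mapMatrix N := rfl
  rw [heq]
  exact hNU.map (PadicInt.toZModPow s).mapMatrix

end aux

/-- Splitting of congruence conditions: if `N` is invertible mod `p`, then the number of
`x` over `ZMod (p^(r+s))` with `x·M ≡ 0 mod p^(r+s)` and `x·N ≡ 0 mod p^s` equals the
number of `y` over `ZMod (p^r)` with `y·M ≡ 0 mod p^r`. -/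
theorem stmt5 (p : ℕ) [Fact p.Prime] (d : ℕ) (hd : 1 ≤ d)
    (M N : Matrix (Fin d) (Fin d) ℤ_[p])
    (hN : IsUnit (N.map (fun a => PadicInt.toZMod a)))
    (r s : ℕ) :
    Nat.card {x : Fin d → ZMod (p ^ (r + s)) //
        Matrix.vecMul x (M.map (fun a => PadicInt.toZModPow (r + s) a)) = 0 ∧
        Matrix.vecMul
          (fun i => ZMod.castHom (pow_dvd_pow p (Nat.le_add_left s r)) (ZMod (p ^ s)) (x i))
          (N.map (fun a => PadicInt.toZModPow s a)) = 0}
      = Nat.card {y : Fin d → ZMod (p ^ r) //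
          Matrix.vecMul y (M.map (fun a => PadicInt.toZModPow r a)) = 0} := by
  have hp : p ≠ 0 := (Fact.out : p.Prime).ne_zero
  haveI : NeZero (p ^ (r + s)) := ⟨stmt5_aux_ne p _⟩
  haveI : NeZero (p ^ r) := ⟨stmt5_aux_ne p _⟩
  haveI : NeZero (p ^ s) := ⟨stmt5_aux_ne p _⟩
  set Mrs := M.map (fun a => PadicInt.toZModPow (r + s) a) with hMrs
  set Mr := M.map (fun a => PadicInt.toZModPow r a) with hMr
  set Ns := N.map (fun a => PadicInt.toZModPow s a) with hNsdef
  have hNs : IsUnit Ns := stmt5_unit_aux p d N hN s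
  -- the map
  set φ : (Fin d → ZMod (p ^ r)) → (Fin d → ZMod (p ^ (r + s))) :=
    fun y i => (p : ZMod (p ^ (r + s))) ^ s * (((y i).val : ℕ) : ZMod (p ^ (r + s))) with hφ
  -- casting entries of Mrs down to Mr
  have hcast : ∀ i j, ZMod.castHom (pow_dvd_pow p (Nat.le_add_right r s)) (ZMod (p ^ r)) (Mrs i j)
      = Mr i j := by
    intro i j
    exact DFunLike.congr_fun
      (PadicInt.zmod_cast_comp_toZModPow (p := p) r (r + s) (Nat.le_add_right r s)) (M i j)
  -- condition transfer
  have hcond : ∀ y : Fin d → ZMod (p ^ r),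
      Matrix.vecMul (φ y) Mrs = 0 ↔ Matrix.vecMul y Mr = 0 := by
    intro y
    rw [funext_iff, funext_iff]
    apply forall_congr'
    intro j
    have hexp : Matrix.vecMul (φ y) Mrs j
        = (p : ZMod (p ^ (r + s))) ^ s
          * ∑ i, (((y i).val : ℕ) : ZMod (p ^ (r + s))) * Mrs i j := by
      simp [Matrix.vecMul, dotProduct, hφ, Finset.mul_sum, mul_assoc]
    rw [hexp, Pi.zero_apply, Pi.zero_apply, stmt5_mul_pow_eq_zero_iff]
    have hval : ((∑ i, (((y i).val : ℕ) : ZMod (p ^ (r + s))) * Mrs i j).val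
          : ZMod (p ^ r))
        = ZMod.castHom (pow_dvd_pow p (Nat.le_add_right r s)) (ZMod (p ^ r))
            (∑ i, (((y i).val : ℕ) : ZMod (p ^ (r + s))) * Mrs i j) := by
      rw [ZMod.castHom_apply, ZMod.natCast_val]
    rw [hval, map_sum]
    have hterm : ∀ i, ZMod.castHom (pow_dvd_pow p (Nat.le_add_right r s)) (ZMod (p ^ r))
        ((((y i).val : ℕ) : ZMod (p ^ (r + s))) * Mrs i j) = y i * Mr i j := by
      intro i
      rw [map_mul, map_natCast, hcast]
      congr 1
      exact ZMod.natCast_rightInverse (y i)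
    rw [Finset.sum_congr rfl (fun i _ => hterm i)]
    rfl
  -- second condition always holds for φ y
  have hsnd : ∀ y : Fin d → ZMod (p ^ r),
      Matrix.vecMul
        (fun i => ZMod.castHom (pow_dvd_pow p (Nat.le_add_left s r)) (ZMod (p ^ s)) (φ y i))
        Ns = 0 := by
    intro y
    have hzero : (fun i => ZMod.castHom (pow_dvd_pow p (Nat.le_add_left s r)) (ZMod (p ^ s))
        (φ y i)) = 0 := by
      funext i
      simp only [hφ, map_mul, map_pow, map_natCast, Pi.zero_apply]
      have : ((p : ZMod (p ^ s)) ^ s) = ((p ^ s : ℕ) : ZMod (p ^ s)) := by push_cast; ring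
      rw [this, ZMod.natCast_self, zero_mul]
    rw [hzero, Matrix.zero_vecMul]
  -- the bijection
  set f : {y : Fin d → ZMod (p ^ r) // Matrix.vecMul y Mr = 0} →
      {x : Fin d → ZMod (p ^ (r + s)) //
        Matrix.vecMul x Mrs = 0 ∧
        Matrix.vecMul
          (fun i => ZMod.castHom (pow_dvd_pow p (Nat.le_add_left s r)) (ZMod (p ^ s)) (x i))
          Ns = 0} :=
    fun y => ⟨φ y.1, (hcond y.1).mpr y.2, hsnd y.1⟩ with hf
  have hbij : Function.Bijective f := by
    constructor
    · rintro ⟨y, hy⟩ ⟨z, hz⟩ h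
      have h' : φ y = φ z := congrArg Subtype.val h
      ext i
      exact stmt5_inj_aux p r s (y i) (z i) (congrFun h' i)
    · rintro ⟨x, hx1, hx2⟩
      -- x reduces to 0 mod p^s
      have hxbar : (fun i => ZMod.castHom (pow_dvd_pow p (Nat.le_add_left s r)) (ZMod (p ^ s))
          (x i)) = 0 := by
        have h2 := congrArg (fun v => Matrix.vecMul v Ns⁻¹) hx2
        simp only [Matrix.vecMul_vecMul, Matrix.zero_vecMul] at h2
        rwa [Matrix.mul_nonsing_inv _ ((Matrix.isUnit_iff_isUnit_det Ns).mp hNs),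
          Matrix.vecMul_one] at h2
      have hx0 : ∀ i, ((x i).val : ZMod (p ^ s)) = 0 := by
        intro i
        have := congrFun hxbar i
        rwa [ZMod.castHom_apply, ← ZMod.natCast_val] at this
      choose a ha using fun i => stmt5_exists_of_cast_eq_zero p r s (x i) (hx0 i)
      have hφa : φ a = x := funext ha
      refine ⟨⟨a, (hcond a).mp ?_⟩, ?_⟩
      · rw [hφa]; exact hx1
      · exact Subtype.ext hφa
  exact (Nat.card_eq_of_bijective f hbij).symm
end

section
/- Let p be a prime, n ≥ 1, and let F be a nonzero polynomial in n variables over the ring ℤ_p of p-adic integers which is homogeneous of degree k, where k ≤ p − 2. Let ν be the minimum of the p-adic valuations of the (finitely many nonzero) coefficients of F. Then: (i) for every tuple (u_1,…,u_n) of units of ℤ_p, p^ν divides F(u_1,…,u_n); and (ii) there exists a tuple (u_1,…,u_n) of units of ℤ_p such that p^{ν+1} does not divide F(u_1,…,u_n), i.e. the p-adic valuation of F(u_1,…,u_n) is exactly ν. -/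
/-!
Write `F = p^ν G`, where some coefficient of `G` is a unit, so the reduction of `G` mod `p` is a
nonzero polynomial over `𝔽_p` of degree at most `k < p - 1` in each variable. By the
combinatorial Nullstellensatz it cannot vanish on all of `(𝔽_p^×)^n`, and any lift of a
non-vanishing point is a tuple of units at which `G` is a unit.
-/

namespace MvPolynomial

theorem exists_eval_ne_zero_of_degreeOf_lt {R σ : Type*} [CommRing R] [IsDomain R]
    [Fintype R] [Finite σ] {g : MvPolynomial σ R} (hg : g ≠ 0)
    (hdeg : ∀ i, g.degreeOf i + 1 < Fintype.card R) :
    ∃ x : σ → R, (∀ i, x i ≠ 0) ∧ eval x g ≠ 0 := by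
  classical
  by_contra! h
  refine hg (eq_zero_of_eval_zero_at_prod_finset g (fun _ ↦ Finset.univ.erase 0) (fun i ↦ ?_)
    fun x hx ↦ h x fun i ↦ Finset.ne_of_mem_erase (hx i))
  rw [Finset.card_erase_of_mem (Finset.mem_univ _), Finset.card_univ]
  have := hdeg i
  omega

theorem IsHomogeneous.degreeOf_le {R σ : Type*} [CommSemiring R]
    {φ : MvPolynomial σ R} {n : ℕ} (h : φ.IsHomogeneous n) (i : σ) : φ.degreeOf i ≤ n := by
  rw [degreeOf_le_iff]
  intro m hm
  calc m i ≤ m.degree := Finsupp.le_degree i m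
    _ = n := by rw [Finsupp.degree_eq_weight_one]; exact h (mem_support_iff.mp hm)

theorem degreeOf_map_le {R S σ : Type*} [CommSemiring R] [CommSemiring S]
    (f : R →+* S) (φ : MvPolynomial σ R) (i : σ) : (map f φ).degreeOf i ≤ φ.degreeOf i := by
  classical
  simp only [degreeOf_def]
  exact Multiset.count_le_of_le i degrees_map_le

end MvPolynomial

open MvPolynomial

namespace PadicInt

variable {p : ℕ} [Fact p.Prime]

theorem toZMod_eq_zero_iff_dvd (x : ℤ_[p]) : toZMod x = 0 ↔ (p : ℤ_[p]) ∣ x := by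
  rw [← RingHom.mem_ker, ker_toZMod, maximalIdeal_eq_span_p, Ideal.mem_span_singleton]

theorem isUnit_iff_toZMod_ne_zero (x : ℤ_[p]) : IsUnit x ↔ toZMod x ≠ 0 := by
  rw [Ne, ← RingHom.mem_ker, ker_toZMod, IsLocalRing.notMem_maximalIdeal]

theorem pow_dvd_iff_le_valuation {x : ℤ_[p]} (hx : x ≠ 0) (n : ℕ) :
    (p : ℤ_[p]) ^ n ∣ x ↔ n ≤ x.valuation := by
  rw [← Ideal.mem_span_singleton, mem_span_pow_iff_le_valuation x hx]

theorem exists_isUnit_not_dvd_eval {σ : Type*} [Finite σ] {G : MvPolynomial σ ℤ_[p]}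
    {m : σ →₀ ℕ} (hm : ¬ (p : ℤ_[p]) ∣ G.coeff m) (hdeg : ∀ i, G.degreeOf i + 1 < p) :
    ∃ u : σ → ℤ_[p], (∀ i, IsUnit (u i)) ∧ ¬ (p : ℤ_[p]) ∣ eval u G := by
  have hg : map toZMod G ≠ 0 := fun h ↦ hm <| by
    rw [← toZMod_eq_zero_iff_dvd, ← coeff_map, h, coeff_zero]
  have hdeg' : ∀ i, (map toZMod G).degreeOf i + 1 < Fintype.card (ZMod p) := fun i ↦
    (ZMod.card p).symm ▸ (Nat.add_le_add_right (degreeOf_map_le _ G i) 1).trans_lt (hdeg i)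
  obtain ⟨x, hx, hxg⟩ := exists_eval_ne_zero_of_degreeOf_lt hg hdeg'
  have hlift : toZMod ∘ (fun i ↦ ((x i).val : ℤ_[p])) = x := by
    ext i; simp
  refine ⟨fun i ↦ (x i).val, fun i ↦ ?_, ?_⟩
  · rw [isUnit_iff_toZMod_ne_zero]
    simpa using hx i
  · rw [← toZMod_eq_zero_iff_dvd, map_eval, hlift]
    exact hxg

end PadicInt

theorem stmt6_general (p : ℕ) [Fact p.Prime] (n : ℕ)
    (F : MvPolynomial (Fin n) ℤ_[p])
    (k : ℕ) (hhom : F.IsHomogeneous k) (hk : k ≤ p - 2)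
    (ν : ℕ)
    (hν : IsLeast {v : ℕ | ∃ m ∈ F.support, (F.coeff m).valuation = (v : ℤ)} ν) :
    (∀ u : Fin n → ℤ_[p], (∀ i, IsUnit (u i)) →
        (p : ℤ_[p]) ^ ν ∣ MvPolynomial.eval u F)
    ∧ ∃ u : Fin n → ℤ_[p], (∀ i, IsUnit (u i)) ∧
        ¬ (p : ℤ_[p]) ^ (ν + 1) ∣ MvPolynomial.eval u F := by
  have hdvd : ∀ m, (p : ℤ_[p]) ^ ν ∣ F.coeff m := fun m ↦ by
    by_cases hm : F.coeff m = 0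
    · simp [hm]
    · exact (PadicInt.pow_dvd_iff_le_valuation hm ν).mpr (hν.2 ⟨m, mem_support_iff.mpr hm, rfl⟩)
  obtain ⟨G, rfl⟩ := (C_dvd_iff_dvd_coeff _ F).mpr hdvd
  have hpν : (p : ℤ_[p]) ^ ν ≠ 0 := pow_ne_zero _ (NeZero.ne _)
  refine ⟨fun u _ ↦ by simp, ?_⟩
  obtain ⟨m₀, hm₀, hval⟩ := hν.1
  have hm₀G : ¬ (p : ℤ_[p]) ∣ G.coeff m₀ := fun ⟨c, hc⟩ ↦ by
    have := (PadicInt.pow_dvd_iff_le_valuation (mem_support_iff.mp hm₀) (ν + 1)).mp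
      ⟨c, by rw [coeff_C_mul, hc, pow_succ, mul_assoc]⟩
    omega
  have hdeg : ∀ i, G.degreeOf i + 1 < p := fun i ↦ by
    have := degreeOf_C_mul i _ (mem_nonZeroDivisors_of_ne_zero hpν) ▸ hhom.degreeOf_le i
    have := (Fact.out : p.Prime).two_le
    omega
  obtain ⟨u, hu, hG⟩ := PadicInt.exists_isUnit_not_dvd_eval hm₀G hdeg
  refine ⟨u, hu, fun h ↦ hG ?_⟩
  rw [map_mul, eval_C, pow_succ] at h
  exact (mul_dvd_mul_iff_left hpν).mp h

/-- For a nonzero homogeneous polynomial `F` of degree `k ≤ p - 2` over `ℤ_p`, with `ν`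
the minimum of the `p`-adic valuations of its coefficients: (i) `p^ν` divides `F(u)` for
every tuple of units `u`, and (ii) some tuple of units `u` has `p^(ν+1) ∤ F(u)`. -/
theorem stmt6 (p : ℕ) [Fact p.Prime] (n : ℕ) (hn : 1 ≤ n)
    (F : MvPolynomial (Fin n) ℤ_[p]) (hF : F ≠ 0)
    (k : ℕ) (hhom : F.IsHomogeneous k) (hk : k ≤ p - 2)
    (ν : ℕ)
    (hν : IsLeast {v : ℕ | ∃ m ∈ F.support, (F.coeff m).valuation = (v : ℤ)} ν) :
    (∀ u : Fin n → ℤ_[p], (∀ i, IsUnit (u i)) →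
        (p : ℤ_[p]) ^ ν ∣ MvPolynomial.eval u F)
    ∧ ∃ u : Fin n → ℤ_[p], (∀ i, IsUnit (u i)) ∧
        ¬ (p : ℤ_[p]) ^ (ν + 1) ∣ MvPolynomial.eval u F :=
  stmt6_general p n F k hhom hk ν hν
end
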